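/- arXiv:2007.10505 — 4 statements merged into one kernel-verified Lean document; each statement's English description precedes it below -/
import Mathlib

section
/- Let K be a k×k real symmetric positive semidefinite matrix and κ ∈ ℝ^k. Let P ⊆ {1,…,k} with complement P̄, and suppose the principal submatrix K_{P,P} is invertible. Define θ_P = (K_{P,P})⁻¹ κ_P, and let θ* ∈ ℝ^k be the vector equal to θ_P on the indices in P and 0 on the indices in P̄. If θ_P has all entries nonnegative and for every i ∈ P̄ one has Σ_{j∈P} K_{ij} (θ_P)_j ≥ κ_i, then θ* minimizes the NNK objective f(θ) = 1 − 2θᵀκ + θᵀKθ over all θ ∈ ℝ^k with nonnegative entries. -/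
/-!
The objective `f` is a convex quadratic whose gradient at `θ*` is `2 (K θ* - κ)`. By construction
`(K θ*)_i = κ_i` on `P`, and the hypothesis on `P̄` says `(K θ*)_i ≥ κ_i` there, where `θ*`
vanishes. Hence `(θ - θ*) ⬝ (K θ* - κ) = ∑_{i ∈ P̄} θ_i ((K θ*)_i - κ_i) ≥ 0` for every
nonnegative `θ`, and the exact expansion `f (θ* + d) = f θ* + 2 d ⬝ (K θ* - κ) + d ⬝ K d` with
`d ⬝ K d ≥ 0` finishes.
-/

open Matrix Finset

namespace Matrix

variable {n : Type*} [Fintype n]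

theorem mulVec_dite_mem {m R : Type*} [DecidableEq n] [CommSemiring R] (A : Matrix m n R)
    (P : Finset n) (v : P → R) (i : m) :
    (A *ᵥ fun j => if h : j ∈ P then v ⟨j, h⟩ else 0) i = ∑ j : P, A i j * v j := by
  rw [mulVec, dotProduct, ← Finset.sum_subset P.subset_univ, ← Finset.sum_coe_sort P]
  · simp
  · intro j _ hj
    simp [hj]

theorem IsSymm.dotProduct_mulVec_comm {R : Type*} [CommSemiring R] {A : Matrix n n R}
    (hA : A.IsSymm) (x y : n → R) : x ⬝ᵥ A *ᵥ y = y ⬝ᵥ A *ᵥ x := by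
  rw [dotProduct_mulVec, dotProduct_comm, ← mulVec_transpose, hA.eq]

omit [Fintype n] in
theorem PosSemidef.isSymm {A : Matrix n n ℝ} (hA : A.PosSemidef) : A.IsSymm := by
  simpa [IsSymm, conjTranspose_eq_transpose_of_trivial] using hA.isHermitian.eq

end Matrix

def nnkObjective {n : Type*} [Fintype n] (K : Matrix n n ℝ) (κ θ : n → ℝ) : ℝ :=
  1 - 2 * (θ ⬝ᵥ κ) + θ ⬝ᵥ K *ᵥ θ

section nnkObjective

variable {n : Type*} [Fintype n] {K : Matrix n n ℝ} {κ : n → ℝ}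

theorem nnkObjective_add (hK : K.IsSymm) (θ d : n → ℝ) :
    nnkObjective K κ (θ + d) =
      nnkObjective K κ θ + 2 * (d ⬝ᵥ (K *ᵥ θ - κ)) + d ⬝ᵥ K *ᵥ d := by
  simp only [nnkObjective, add_dotProduct, mulVec_add, dotProduct_add, dotProduct_sub,
    hK.dotProduct_mulVec_comm θ d]
  ring

theorem nnkObjective_le_of_dotProduct_sub_nonneg (hK : K.PosSemidef) {θ₀ θ : n → ℝ}
    (hθ : 0 ≤ (θ - θ₀) ⬝ᵥ (K *ᵥ θ₀ - κ)) : nnkObjective K κ θ₀ ≤ nnkObjective K κ θ := by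
  have hquad : 0 ≤ (θ - θ₀) ⬝ᵥ K *ᵥ (θ - θ₀) := by
    simpa using hK.dotProduct_mulVec_nonneg (θ - θ₀)
  rw [← add_sub_cancel θ₀ θ, nnkObjective_add hK.isSymm]
  linarith

theorem nnkObjective_le_of_kkt (hK : K.PosSemidef) {θ₀ : n → ℝ}
    (hslack : ∀ i, θ₀ i = 0 ∨ (K *ᵥ θ₀) i = κ i) (hgrad : ∀ i, κ i ≤ (K *ᵥ θ₀) i)
    {θ : n → ℝ} (hθ : ∀ i, 0 ≤ θ i) : nnkObjective K κ θ₀ ≤ nnkObjective K κ θ := by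
  refine nnkObjective_le_of_dotProduct_sub_nonneg hK (Finset.sum_nonneg fun i _ => ?_)
  rcases hslack i with hzero | hactive
  · simpa [hzero] using mul_nonneg (hθ i) (sub_nonneg.2 (hgrad i))
  · simp [hactive]

end nnkObjective

theorem nnk_active_set_solution_general {k : ℕ} (K : Matrix (Fin k) (Fin k) ℝ)
    (hK : K.PosSemidef) (κ : Fin k → ℝ) (P : Finset (Fin k))
    (hInv : IsUnit (K.submatrix (fun i : P => (i : Fin k)) (fun j : P => (j : Fin k))).det)
    (θP : P → ℝ)
    (hθP : θP = (K.submatrix (fun i : P => (i : Fin k)) (fun j : P => (j : Fin k)))⁻¹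
        *ᵥ (fun i : P => κ i))
    (θs : Fin k → ℝ)
    (hθs : ∀ i : Fin k, θs i = if h : i ∈ P then θP ⟨i, h⟩ else 0)
    (hGe : ∀ i : Fin k, i ∉ P → κ i ≤ ∑ j : P, K i j * θP j) :
    ∀ θ : Fin k → ℝ, (∀ i, 0 ≤ θ i) →
      1 - 2 * (θs ⬝ᵥ κ) + θs ⬝ᵥ K.mulVec θs ≤ 1 - 2 * (θ ⬝ᵥ κ) + θ ⬝ᵥ K.mulVec θ := by
  intro θ hθ
  have hKθs (i : Fin k) : (K *ᵥ θs) i = ∑ j : P, K i j * θP j := by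
    rw [funext hθs, mulVec_dite_mem]
  have hsolve : K.submatrix (↑) (↑) *ᵥ θP = fun i : P => κ i := by
    rw [hθP, mulVec_mulVec, mul_nonsing_inv _ hInv, one_mulVec]
  have hactive (i : Fin k) (hi : i ∈ P) : (K *ᵥ θs) i = κ i := by
    rw [hKθs]
    simpa [mulVec, dotProduct] using congrFun hsolve ⟨i, hi⟩
  refine nnkObjective_le_of_kkt hK (fun i => ?_) (fun i => ?_) hθ
  · by_cases hi : i ∈ P
    · exact .inr (hactive i hi)
    · exact .inl (by simp [hθs, hi])
  · by_cases hi : i ∈ P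
    · exact (hactive i hi).ge
    · exact (hGe i hi).trans_eq (hKθs i).symm

/-- the explicit active-set solution `θ_P = (K_{P,P})⁻¹ κ_P`, extended by zero
off `P`, minimizes the NNK objective over the nonnegative orthant, provided it is
nonnegative and the complementary inequality constraints hold. -/
theorem nnk_active_set_solution {k : ℕ} (K : Matrix (Fin k) (Fin k) ℝ)
    (hK : K.PosSemidef) (κ : Fin k → ℝ) (P : Finset (Fin k))
    (hInv : IsUnit (K.submatrix (fun i : P => (i : Fin k)) (fun j : P => (j : Fin k))).det)
    (θP : P → ℝ)
    (hθP : θP = (K.submatrix (fun i : P => (i : Fin k)) (fun j : P => (j : Fin k)))⁻¹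
        *ᵥ (fun i : P => κ i))
    (θs : Fin k → ℝ)
    (hθs : ∀ i : Fin k, θs i = if h : i ∈ P then θP ⟨i, h⟩ else 0)
    (hNonneg : ∀ j : P, 0 ≤ θP j)
    (hGe : ∀ i : Fin k, i ∉ P → κ i ≤ ∑ j : P, K i j * θP j) :
    ∀ θ : Fin k → ℝ, (∀ i, 0 ≤ θ i) →
      1 - 2 * (θs ⬝ᵥ κ) + θs ⬝ᵥ K.mulVec θs ≤ 1 - 2 * (θ ⬝ᵥ κ) + θ ⬝ᵥ K.mulVec θ :=
  nnk_active_set_solution_general K hK κ P hInv θP hθP θs hθs hGe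
end

section
/- Let H be a real inner product space and let φ_i, φ_j, φ_k ∈ H be unit vectors with pairwise inner products K_ij = ⟨φ_i, φ_j⟩, K_ik = ⟨φ_i, φ_k⟩, K_jk = ⟨φ_j, φ_k⟩, all lying in [0, 1), so that in particular φ_j and φ_k are linearly independent and the function (θ_j, θ_k) ↦ ‖φ_i − θ_j φ_j − θ_k φ_k‖² has a unique minimizer over the quadrant {θ_j ≥ 0, θ_k ≥ 0}. Then this minimizer has both coordinates strictly positive if and only if K_ik·K_jk < K_ij and K_ij·K_jk < K_ik (equivalently, K_jk < K_ij/K_ik < 1/K_jk). -/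
/-!
Expanding the residual in the Gram entries gives a quadratic in `θ` whose Hessian is the Gram
matrix `[[1, c], [c, 1]]` of `φj, φk` (with `c = Kjk`), positive definite as `c ^ 2 < 1`. Hence a
point satisfying the KKT conditions on the quadrant is its unique minimizer there. Such a point is
`(0, Kik)` if `Kij ≤ Kik c`, `(Kij, 0)` if `Kik ≤ Kij c`, and otherwise the solution of the normal
equations, whose coordinates `(Kij - Kik c) / (1 - c²)` and `(Kik - Kij c) / (1 - c²)` are positive
exactly under the two ratio conditions.
-/

open scoped RealInnerProductSpace

def nnlsObjective (Kij Kik c : ℝ) (θ : ℝ × ℝ) : ℝ :=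
  1 + θ.1 ^ 2 + θ.2 ^ 2 - 2 * θ.1 * Kij - 2 * θ.2 * Kik + 2 * θ.1 * θ.2 * c

lemma norm_sub_smul_sub_smul_sq {H : Type*} [NormedAddCommGroup H] [InnerProductSpace ℝ H]
    {x u v : H} (hx : ‖x‖ = 1) (hu : ‖u‖ = 1) (hv : ‖v‖ = 1) (θ : ℝ × ℝ) :
    ‖x - θ.1 • u - θ.2 • v‖ ^ 2 = nnlsObjective ⟪x, u⟫ ⟪x, v⟫ ⟪u, v⟫ θ := by
  rw [← real_inner_self_eq_norm_sq]
  simp only [inner_sub_left, inner_sub_right, real_inner_smul_left, real_inner_smul_right]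
  simp only [real_inner_self_eq_norm_sq, hx, hu, hv, real_inner_comm x u, real_inner_comm x v,
    real_inner_comm u v, nnlsObjective]
  ring

/-- The Karush–Kuhn–Tucker conditions for minimizing `nnlsObjective Kij Kik c` over the closed
quadrant; half the gradient of the objective at `θ` is `(θ.1 + c θ.2 - Kij, θ.2 + c θ.1 - Kik)`. -/
structure IsKKTPoint (Kij Kik c : ℝ) (θ : ℝ × ℝ) : Prop where
  fst_nonneg : 0 ≤ θ.1
  snd_nonneg : 0 ≤ θ.2
  le_grad_fst : Kij ≤ θ.1 + c * θ.2
  le_grad_snd : Kik ≤ θ.2 + c * θ.1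
  slack_fst : θ.1 * (θ.1 + c * θ.2 - Kij) = 0
  slack_snd : θ.2 * (θ.2 + c * θ.1 - Kik) = 0

lemma quadForm_pos {c u v : ℝ} (hc : c ^ 2 < 1) (huv : u ≠ 0 ∨ v ≠ 0) :
    0 < u ^ 2 + v ^ 2 + 2 * c * u * v := by
  have hsq : u ^ 2 + v ^ 2 + 2 * c * u * v = (u + c * v) ^ 2 + (1 - c ^ 2) * v ^ 2 := by ring
  rcases eq_or_ne v 0 with rfl | hv
  · simpa [sq_pos_iff] using huv
  · rw [hsq]
    have : 0 < (1 - c ^ 2) * v ^ 2 := mul_pos (by linarith) (by positivity)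
    positivity

lemma exists_isKKTPoint {Kij Kik c : ℝ} (hij : 0 ≤ Kij) (hik : 0 ≤ Kik) (hc : c ^ 2 < 1) :
    ∃ θ, IsKKTPoint Kij Kik c θ := by
  rcases le_or_gt Kij (Kik * c) with h₁ | h₁
  · exact ⟨(0, Kik), ⟨le_rfl, hik, by simpa [mul_comm] using h₁, by simp, by simp, by simp⟩⟩
  rcases le_or_gt Kik (Kij * c) with h₂ | h₂
  · exact ⟨(Kij, 0), ⟨hij, le_rfl, by simp, by simpa [mul_comm] using h₂, by simp, by simp⟩⟩
  have hD : 0 < 1 - c ^ 2 := by linarith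
  set A := (Kij - Kik * c) / (1 - c ^ 2)
  set B := (Kik - Kij * c) / (1 - c ^ 2)
  have hA : A + c * B = Kij := by simp only [A, B]; field_simp; ring
  have hB : B + c * A = Kik := by simp only [A, B]; field_simp; ring
  exact ⟨(A, B), div_nonneg (by linarith) hD.le, div_nonneg (by linarith) hD.le, hA.ge, hB.ge,
    by simp [hA], by simp [hB]⟩

namespace IsKKTPoint

variable {Kij Kik c : ℝ} {p : ℝ × ℝ}

lemma swap (hp : IsKKTPoint Kij Kik c p) : IsKKTPoint Kik Kij c p.swap :=
  ⟨hp.snd_nonneg, hp.fst_nonneg, hp.le_grad_snd, hp.le_grad_fst, hp.slack_snd, hp.slack_fst⟩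

lemma objective_lt (hp : IsKKTPoint Kij Kik c p) (hc : c ^ 2 < 1) {θ : ℝ × ℝ} (h₁ : 0 ≤ θ.1)
    (h₂ : 0 ≤ θ.2) (hne : θ ≠ p) :
    nnlsObjective Kij Kik c p < nnlsObjective Kij Kik c θ := by
  have hexp : nnlsObjective Kij Kik c θ - nnlsObjective Kij Kik c p =
      ((θ.1 - p.1) ^ 2 + (θ.2 - p.2) ^ 2 + 2 * c * (θ.1 - p.1) * (θ.2 - p.2)) +
        2 * ((θ.1 - p.1) * (p.1 + c * p.2 - Kij)) + 2 * ((θ.2 - p.2) * (p.2 + c * p.1 - Kik)) := by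
    simp only [nnlsObjective]; ring
  have hquad : 0 < (θ.1 - p.1) ^ 2 + (θ.2 - p.2) ^ 2 + 2 * c * (θ.1 - p.1) * (θ.2 - p.2) := by
    refine quadForm_pos hc (not_and_or.mp fun h => hne (Prod.ext ?_ ?_))
    · exact sub_eq_zero.mp h.1
    · exact sub_eq_zero.mp h.2
  -- complementary slackness turns the first-order terms into `θ.i * (gradient)ᵢ ≥ 0`
  have hlin₁ : 0 ≤ (θ.1 - p.1) * (p.1 + c * p.2 - Kij) := by
    rw [sub_mul, hp.slack_fst, sub_zero]
    exact mul_nonneg h₁ (sub_nonneg.mpr hp.le_grad_fst)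
  have hlin₂ : 0 ≤ (θ.2 - p.2) * (p.2 + c * p.1 - Kik) := by
    rw [sub_mul, hp.slack_snd, sub_zero]
    exact mul_nonneg h₂ (sub_nonneg.mpr hp.le_grad_snd)
  linarith

lemma objective_le (hp : IsKKTPoint Kij Kik c p) (hc : c ^ 2 < 1) {θ : ℝ × ℝ} (h₁ : 0 ≤ θ.1)
    (h₂ : 0 ≤ θ.2) : nnlsObjective Kij Kik c p ≤ nnlsObjective Kij Kik c θ := by
  rcases eq_or_ne θ p with rfl | hne
  · exact le_rfl
  · exact (hp.objective_lt hc h₁ h₂ hne).le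

lemma eq_of_objective_le (hp : IsKKTPoint Kij Kik c p) (hc : c ^ 2 < 1) {θ : ℝ × ℝ}
    (h₁ : 0 ≤ θ.1) (h₂ : 0 ≤ θ.2)
    (hle : nnlsObjective Kij Kik c θ ≤ nnlsObjective Kij Kik c p) : θ = p := by
  by_contra hne
  exact (hp.objective_lt hc h₁ h₂ hne).not_ge hle

lemma mul_lt_of_pos (hp : IsKKTPoint Kij Kik c p) (hc : c ^ 2 < 1) (h₁ : 0 < p.1)
    (h₂ : 0 < p.2) : Kik * c < Kij := by
  have e₁ : p.1 + c * p.2 = Kij :=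
    sub_eq_zero.mp ((mul_eq_zero.mp hp.slack_fst).resolve_left h₁.ne')
  have e₂ : p.2 + c * p.1 = Kik :=
    sub_eq_zero.mp ((mul_eq_zero.mp hp.slack_snd).resolve_left h₂.ne')
  have : Kij - Kik * c = p.1 * (1 - c ^ 2) := by rw [← e₁, ← e₂]; ring
  nlinarith

lemma fst_pos (hp : IsKKTPoint Kij Kik c p) (hc : c ^ 2 < 1) (hj : Kik * c < Kij)
    (hk : Kij * c < Kik) : 0 < p.1 := by
  refine hp.fst_nonneg.lt_of_ne fun h₁ => ?_
  have hgrad₁ := hp.le_grad_fst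
  have hgrad₂ := hp.le_grad_snd
  have hslack := hp.slack_snd
  rw [← h₁] at hgrad₁ hgrad₂ hslack
  rcases mul_eq_zero.mp hslack with h₂ | h₂
  · rw [h₂] at hgrad₁ hgrad₂
    have : c < 1 := by nlinarith
    nlinarith
  · have : p.2 = Kik := by linarith
    rw [this] at hgrad₁
    linarith

lemma pos_and_pos_iff (hp : IsKKTPoint Kij Kik c p) (hc : c ^ 2 < 1) :
    (0 < p.1 ∧ 0 < p.2) ↔ (Kik * c < Kij ∧ Kij * c < Kik) :=
  ⟨fun ⟨h₁, h₂⟩ => ⟨hp.mul_lt_of_pos hc h₁ h₂, hp.swap.mul_lt_of_pos hc h₂ h₁⟩,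
    fun ⟨hj, hk⟩ => ⟨hp.fst_pos hc hj hk, hp.swap.fst_pos hc hk hj⟩⟩

end IsKKTPoint

/-- Kernel Ratio Interval theorem: for unit vectors `φi, φj, φk` with pairwise
inner products in `[0, 1)`, the nonnegative least squares approximation of `φi` by `φj, φk`
has a unique minimizer over the quadrant, and both of its coordinates are strictly positive
iff `Kik·Kjk < Kij` and `Kij·Kjk < Kik`. -/
theorem kernel_ratio_interval {H : Type*} [NormedAddCommGroup H] [InnerProductSpace ℝ H]
    (φi φj φk : H) (hi : ‖φi‖ = 1) (hj : ‖φj‖ = 1) (hk : ‖φk‖ = 1)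
    (Kij Kik Kjk : ℝ)
    (hKij : Kij = inner ℝ φi φj) (hKik : Kik = inner ℝ φi φk) (hKjk : Kjk = inner ℝ φj φk)
    (hij : Kij ∈ Set.Ico (0 : ℝ) 1) (hik : Kik ∈ Set.Ico (0 : ℝ) 1)
    (hjk : Kjk ∈ Set.Ico (0 : ℝ) 1) :
    ∃ θ : ℝ × ℝ, (0 ≤ θ.1 ∧ 0 ≤ θ.2 ∧
        ∀ θ' : ℝ × ℝ, 0 ≤ θ'.1 → 0 ≤ θ'.2 →
          ‖φi - θ.1 • φj - θ.2 • φk‖ ^ 2 ≤ ‖φi - θ'.1 • φj - θ'.2 • φk‖ ^ 2) ∧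
      (∀ θ' : ℝ × ℝ, (0 ≤ θ'.1 ∧ 0 ≤ θ'.2 ∧
        ∀ θ'' : ℝ × ℝ, 0 ≤ θ''.1 → 0 ≤ θ''.2 →
          ‖φi - θ'.1 • φj - θ'.2 • φk‖ ^ 2 ≤ ‖φi - θ''.1 • φj - θ''.2 • φk‖ ^ 2) → θ' = θ) ∧
      ((0 < θ.1 ∧ 0 < θ.2) ↔ (Kik * Kjk < Kij ∧ Kij * Kjk < Kik)) := by
  subst hKij hKik hKjk
  have hc : ⟪φj, φk⟫ ^ 2 < 1 := by nlinarith [hjk.1, hjk.2]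
  obtain ⟨p, hp⟩ := exists_isKKTPoint hij.1 hik.1 hc
  simp only [norm_sub_smul_sub_smul_sq hi hj hk]
  exact ⟨p, ⟨hp.fst_nonneg, hp.snd_nonneg, fun θ h₁ h₂ => hp.objective_le hc h₁ h₂⟩,
    fun θ ⟨h₁, h₂, hmin⟩ => hp.eq_of_objective_le hc h₁ h₂ (hmin p hp.fst_nonneg hp.snd_nonneg),
    hp.pos_and_pos_iff hc⟩
end

section
/- Let (Ω, F, P) be a probability space and k ≥ 1. Let ε₁,…,ε_k be mutually independent, square-integrable, mean-zero real random variables with Var(ε_i) ≤ ν + A′δ^{α′} for constants ν, A′ ≥ 0, δ ≥ 0, α′ > 0. Let E₁,…,E_k be i.i.d. rate-1 exponential random variables, jointly independent of (ε₁,…,ε_k), and set W_i = E_i / (E₁ + ⋯ + E_k). Let b₁,…,b_k be real constants with |b_i| ≤ Aδ^α for constants A ≥ 0, α > 0. Then E[(Σ_{i=1}^k W_i (ε_i + b_i))²] ≤ A²δ^{2α} + (2/(k+1))·(ν + A′δ^{α′}). -/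
/-!
The error splits as `∑ Wᵢ (εᵢ + bᵢ)` with the weights independent of the noise, so that
`E[Wᵢ Wⱼ (εᵢ + bᵢ)(εⱼ + bⱼ)] = E[Wᵢ Wⱼ] (bᵢ bⱼ + [i = j] Var εᵢ)`: the second moment is exactly
`E[(∑ Wᵢ bᵢ)²] + ∑ E[Wᵢ²] Var εᵢ`. The bias part is at most `(A δ^α)²` because `∑ Wᵢ bᵢ` is a
convex combination of the `bᵢ`. For the Dirichlet second moment, with `S = ∑ Eⱼ`, write
`1 / S² = ∫₀^∞ t e^{-tS} dt`; by independence `E[Eᵢ² e^{-tS}] = 2 / (1 + t)^(k + 2)`, and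
`∫₀^∞ 2t / (1 + t)^(k + 2) dt = 2 / (k (k + 1))`.
-/

open MeasureTheory ProbabilityTheory Real Set Filter Topology
open scoped Nat

section GammaIntegrals

lemma integral_pow_mul_exp_neg_mul_Ioi (n : ℕ) {r : ℝ} (hr : 0 < r) :
    ∫ x in Ioi (0 : ℝ), x ^ n * exp (-(r * x)) = n ! / r ^ (n + 1) := by
  have h := integral_rpow_mul_exp_neg_mul_Ioi (a := n + 1) n.cast_add_one_pos hr
  rw [add_sub_cancel_right, Gamma_nat_eq_factorial, ← Nat.cast_succ, rpow_natCast] at h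
  simp_rw [rpow_natCast] at h
  rw [h, one_div_pow, one_div_mul_eq_div]

lemma lintegral_pow_mul_exp_neg_mul_Ioi (n : ℕ) {r : ℝ} (hr : 0 < r) :
    ∫⁻ x in Ioi (0 : ℝ), ENNReal.ofReal (x ^ n * exp (-(r * x))) =
      ENNReal.ofReal (n ! / r ^ (n + 1)) := by
  have hpos : 0 < ∫ x in Ioi (0 : ℝ), x ^ n * exp (-(r * x)) := by
    rw [integral_pow_mul_exp_neg_mul_Ioi n hr]
    positivity
  rw [← integral_pow_mul_exp_neg_mul_Ioi n hr,
    ofReal_integral_eq_lintegral_ofReal (Integrable.of_integral_ne_zero hpos.ne')]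
  filter_upwards [ae_restrict_mem measurableSet_Ioi] with x (hx : 0 < x)
  positivity

lemma ofReal_sq_div_eq_lintegral (x : ℝ) {s : ℝ} (hs : 0 < s) :
    ENNReal.ofReal ((x / s) ^ 2) =
      ∫⁻ t in Ioi 0, ENNReal.ofReal t * ENNReal.ofReal (x ^ 2 * exp (-(t * s))) := by
  have hsplit : ∀ t ∈ Ioi (0 : ℝ), ENNReal.ofReal t * ENNReal.ofReal (x ^ 2 * exp (-(t * s))) =
      ENNReal.ofReal (x ^ 2) * ENNReal.ofReal (t ^ 1 * exp (-(s * t))) := fun t (ht : 0 < t) => by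
    rw [← ENNReal.ofReal_mul ht.le, ← ENNReal.ofReal_mul (sq_nonneg _)]
    ring_nf
  rw [setLIntegral_congr_fun measurableSet_Ioi hsplit, lintegral_const_mul _ (by fun_prop),
    lintegral_pow_mul_exp_neg_mul_Ioi 1 hs, ← ENNReal.ofReal_mul (sq_nonneg _)]
  congr 1
  field_simp
  norm_num

lemma hasDerivAt_inv_one_add_pow (m : ℕ) {t : ℝ} (ht : 0 < 1 + t) :
    HasDerivAt (fun t : ℝ => ((1 + t) ^ (m + 1))⁻¹) (-(m + 1) / (1 + t) ^ (m + 2)) t := by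
  refine ((((hasDerivAt_id' t).const_add 1).fun_pow (m + 1)).inv
    (pow_ne_zero _ ht.ne')).congr_deriv ?_
  field_simp
  push_cast
  ring

lemma lintegral_Ioi_div_one_add_pow {n : ℕ} (hn : n ≠ 0) :
    ∫⁻ t in Ioi (0 : ℝ), ENNReal.ofReal (t / (1 + t) ^ (n + 2)) =
      ENNReal.ofReal (1 / (n * (n + 1))) := by
  obtain ⟨m, rfl⟩ := Nat.exists_eq_succ_of_ne_zero hn
  set g : ℝ → ℝ := fun t => ((m : ℝ) + 2)⁻¹ * ((1 + t) ^ (m + 2))⁻¹ -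
    ((m : ℝ) + 1)⁻¹ * ((1 + t) ^ (m + 1))⁻¹ with hg
  have hderiv : ∀ t ∈ Ici (0 : ℝ), HasDerivAt g (t / (1 + t) ^ (m + 1 + 2)) t := by
    intro t (ht : 0 ≤ t)
    have h1 : (0 : ℝ) < 1 + t := by linarith
    refine (((hasDerivAt_inv_one_add_pow (m + 1) h1).const_mul ((m : ℝ) + 2)⁻¹).fun_sub
      ((hasDerivAt_inv_one_add_pow m h1).const_mul ((m : ℝ) + 1)⁻¹)).congr_deriv ?_
    field_simp
    push_cast
    ring
  have hnonneg : ∀ t ∈ Ioi (0 : ℝ), 0 ≤ t / (1 + t) ^ (m + 1 + 2) := fun t (ht : 0 < t) => by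
    positivity
  have hlim : Tendsto g atTop (𝓝 0) := by
    have hpow : ∀ j : ℕ, Tendsto (fun t : ℝ => ((1 + t) ^ (j + 1))⁻¹) atTop (𝓝 0) := fun j =>
      ((tendsto_pow_atTop j.succ_ne_zero).comp
        (tendsto_atTop_add_const_left _ 1 tendsto_id)).inv_tendsto_atTop
    simpa using ((hpow (m + 1)).const_mul _).sub ((hpow m).const_mul _)
  rw [← ofReal_integral_eq_lintegral_ofReal (integrableOn_Ioi_deriv_of_nonneg' hderiv hnonneg hlim)
      ((ae_restrict_iff' measurableSet_Ioi).2 (ae_of_all _ hnonneg)),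
    integral_Ioi_of_hasDerivAt_of_nonneg' hderiv hnonneg hlim, hg]
  congr 1
  push_cast
  field_simp
  ring

end GammaIntegrals

section ExponentialDistribution

variable {Ω : Type*} [MeasurableSpace Ω] {μ : Measure Ω}

lemma lintegral_expMeasure {r : ℝ} (f : ℝ → ENNReal) (hf : Measurable f) :
    ∫⁻ x, f x ∂expMeasure r = ∫⁻ x in Ioi (0 : ℝ), ENNReal.ofReal (r * exp (-(r * x))) * f x := by
  rw [expMeasure, gammaMeasure, lintegral_withDensity_eq_lintegral_mul _
      (show Measurable (gammaPDF 1 r) from (measurable_gammaPDFReal 1 r).ennreal_ofReal) hf,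
    setLIntegral_congr Ioi_ae_eq_Ici, ← lintegral_indicator measurableSet_Ici]
  congr 1 with x
  by_cases hx : 0 ≤ x
  · rw [indicator_of_mem (mem_Ici.2 hx), Pi.mul_apply,
      show gammaPDF 1 r x = _ from exponentialPDF_of_nonneg hx]
  · rw [indicator_of_notMem (mt mem_Ici.1 hx), Pi.mul_apply, gammaPDF_of_neg (not_le.1 hx),
      zero_mul]

lemma lintegral_pow_mul_exp_neg_mul_expMeasure (n : ℕ) {r t : ℝ} (hr : 0 < r) (ht : 0 < r + t) :
    ∫⁻ x, ENNReal.ofReal (x ^ n * exp (-(t * x))) ∂expMeasure r =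
      ENNReal.ofReal (r * n ! / (r + t) ^ (n + 1)) := by
  rw [lintegral_expMeasure _ (by fun_prop), mul_div_assoc, ENNReal.ofReal_mul hr.le,
    ← lintegral_pow_mul_exp_neg_mul_Ioi n ht, ← lintegral_const_mul _ (by fun_prop)]
  refine setLIntegral_congr_fun measurableSet_Ioi fun x (hx : 0 < x) => ?_
  rw [← ENNReal.ofReal_mul (by positivity), ← ENNReal.ofReal_mul hr.le, mul_mul_mul_comm,
    ← exp_add]
  ring_nf

lemma expMeasure_Iic_zero (r : ℝ) : expMeasure r (Iic 0) = 0 := by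
  rw [expMeasure, gammaMeasure, withDensity_apply _ measurableSet_Iic,
    ← setLIntegral_congr Iio_ae_eq_Iic]
  exact lintegral_exponentialPDF_of_nonpos le_rfl

lemma ae_pos_of_map_eq_expMeasure {X : Ω → ℝ} (hX : Measurable X) {r : ℝ}
    (h : μ.map X = expMeasure r) : ∀ᵐ ω ∂μ, 0 < X ω := by
  have hpos : ∀ᵐ x ∂expMeasure r, 0 < x := by
    rw [ae_iff]
    simp only [not_lt]
    exact expMeasure_Iic_zero r
  rw [← h] at hpos
  exact ae_of_ae_map hX.aemeasurable hpos

variable {ι : Type*} [Fintype ι] {E : ι → Ω → ℝ}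

lemma lintegral_prod_pow_mul_exp_neg_mul_sum (hE : ∀ i, Measurable (E i)) (hind : iIndepFun E μ)
    (hdist : ∀ i, μ.map (E i) = expMeasure 1) (n : ι → ℕ) {t : ℝ} (ht : -1 < t) :
    ∫⁻ ω, ENNReal.ofReal ((∏ i, E i ω ^ n i) * exp (-(t * ∑ i, E i ω))) ∂μ =
      ENNReal.ofReal ((∏ i, (n i)! : ℝ) / (1 + t) ^ (∑ i, n i + Fintype.card ι)) := by
  set f : ι → ℝ → ENNReal := fun i x => ENNReal.ofReal (x ^ n i * exp (-(t * x)))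
  have hfm : ∀ i, Measurable (f i) := fun i => by fun_prop
  have hfactor : ∀ᵐ ω ∂μ, ENNReal.ofReal ((∏ i, E i ω ^ n i) * exp (-(t * ∑ i, E i ω))) =
      ∏ i, f i (E i ω) := by
    filter_upwards [ae_all_iff.2 fun i => ae_pos_of_map_eq_expMeasure (hE i) (hdist i)]
      with ω hω
    rw [Finset.mul_sum, ← Finset.sum_neg_distrib, exp_sum, ← Finset.prod_mul_distrib,
      ENNReal.ofReal_prod_of_nonneg fun i _ => by have := hω i; positivity]
  have hmoment : ∀ i, ∫⁻ ω, f i (E i ω) ∂μ = ENNReal.ofReal ((n i)! / (1 + t) ^ (n i + 1)) := by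
    intro i
    rw [← lintegral_map (hfm i) (hE i), hdist i,
      lintegral_pow_mul_exp_neg_mul_expMeasure (n i) one_pos (by linarith), one_mul]
  rw [lintegral_congr_ae hfactor, lintegral_prod_eq_prod_lintegral_of_indepFun _
      (fun i ω => f i (E i ω)) (hind.comp f hfm) fun i => (hfm i).comp (hE i)]
  simp_rw [hmoment]
  have ht' : 0 < 1 + t := by linarith
  rw [← ENNReal.ofReal_prod_of_nonneg fun i _ => div_nonneg (by positivity) (by positivity),
    Finset.prod_div_distrib, Finset.prod_pow_eq_pow_sum, Finset.sum_add_distrib,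
    Finset.sum_const, Finset.card_univ, smul_eq_mul, mul_one]

theorem integral_sq_div_sum_of_iIndepFun_expMeasure (hE : ∀ i, Measurable (E i))
    (hind : iIndepFun E μ) (hdist : ∀ i, μ.map (E i) = expMeasure 1) (i : ι) :
    ∫ ω, (E i ω / ∑ j, E j ω) ^ 2 ∂μ = 2 / (Fintype.card ι * (Fintype.card ι + 1)) := by
  classical
  have := hind.isProbabilityMeasure
  set k := Fintype.card ι
  have hk : k ≠ 0 := (Fintype.card_pos_iff.2 ⟨i⟩).ne'
  set n : ι → ℕ := Pi.single i 2
  have hprod : ∀ ω, ∏ j, E j ω ^ n j = E i ω ^ 2 := fun ω => by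
    rw [Fintype.prod_eq_single i fun j hj => by simp [n, hj]]
    simp [n]
  have hfact : ∏ j, ((n j)! : ℝ) = 2 := by
    rw [Fintype.prod_eq_single i fun j hj => by simp [n, hj]]
    simp [n]
  have hsum : ∑ j, n j = 2 := by simp [n]
  have hlaplace : ∀ᵐ ω ∂μ, ENNReal.ofReal ((E i ω / ∑ j, E j ω) ^ 2) = ∫⁻ t in Ioi 0,
      ENNReal.ofReal t * ENNReal.ofReal ((∏ j, E j ω ^ n j) * exp (-(t * ∑ j, E j ω))) := by
    filter_upwards [ae_all_iff.2 fun j => ae_pos_of_map_eq_expMeasure (hE j) (hdist j)]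
      with ω hω
    simp_rw [hprod ω]
    exact ofReal_sq_div_eq_lintegral _ (Finset.sum_pos (fun j _ => hω j) ⟨i, Finset.mem_univ i⟩)
  have hinner : ∀ t ∈ Ioi (0 : ℝ), ∫⁻ ω, ENNReal.ofReal t *
      ENNReal.ofReal ((∏ j, E j ω ^ n j) * exp (-(t * ∑ j, E j ω))) ∂μ =
      ENNReal.ofReal 2 * ENNReal.ofReal (t / (1 + t) ^ (k + 2)) := by
    intro t (ht : 0 < t)
    rw [lintegral_const_mul _ (by fun_prop), lintegral_prod_pow_mul_exp_neg_mul_sum hE hind hdist n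
      (by linarith), hfact, hsum, ← ENNReal.ofReal_mul ht.le, ← ENNReal.ofReal_mul zero_le_two]
    congr 1
    ring
  have hSm : Measurable fun ω => ∑ j, E j ω := Finset.measurable_sum _ fun j _ => hE j
  rw [integral_eq_lintegral_of_nonneg_ae (f := fun ω => (E i ω / ∑ j, E j ω) ^ 2)
      (ae_of_all _ fun ω => sq_nonneg _) (((hE i).div hSm).pow_const 2).aestronglyMeasurable,
    lintegral_congr_ae hlaplace, lintegral_lintegral_swap (by fun_prop),
    setLIntegral_congr_fun measurableSet_Ioi hinner, lintegral_const_mul _ (by fun_prop),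
    lintegral_Ioi_div_one_add_pow hk, ← ENNReal.ofReal_mul zero_le_two,
    ENNReal.toReal_ofReal (by positivity)]
  ring

lemma div_sum_mem_stdSimplex {v : ι → ℝ} (hv : ∀ i, 0 ≤ v i) (hs : ∑ i, v i ≠ 0) :
    (fun i => v i / ∑ j, v j) ∈ stdSimplex ℝ ι :=
  ⟨fun i => div_nonneg (hv i) (Finset.sum_nonneg fun j _ => hv j), by
    rw [← Finset.sum_div, div_self hs]⟩

lemma ae_div_sum_mem_stdSimplex_of_map_eq_expMeasure [Nonempty ι] (hE : ∀ i, Measurable (E i))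
    {r : ℝ} (hdist : ∀ i, μ.map (E i) = expMeasure r) :
    ∀ᵐ ω ∂μ, (fun i => E i ω / ∑ j, E j ω) ∈ stdSimplex ℝ ι := by
  filter_upwards [ae_all_iff.2 fun i => ae_pos_of_map_eq_expMeasure (hE i) (hdist i)] with ω hω
  exact div_sum_mem_stdSimplex (fun i => (hω i).le)
    (Finset.sum_pos (fun i _ => hω i) Finset.univ_nonempty).ne'

end ExponentialDistribution

section RandomWeights

variable {Ω ι : Type*} [MeasurableSpace Ω] {μ : Measure Ω} {ε : ι → Ω → ℝ}

lemma integral_add_const_mul_add_const [IsProbabilityMeasure μ] [DecidableEq ι]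
    (hε : ∀ i, MemLp (ε i) 2 μ) (hεindep : Pairwise fun i j => IndepFun (ε i) (ε j) μ)
    (hεmean : ∀ i, μ[ε i] = 0) (b : ι → ℝ) (i j : ι) :
    ∫ ω, (ε i ω + b i) * (ε j ω + b j) ∂μ = b i * b j + if i = j then Var[ε i; μ] else 0 := by
  have hmean : ∀ l, ∫ ω, ε l ω + b l ∂μ = b l := fun l => by
    rw [integral_add ((hε l).integrable one_le_two) (integrable_const _), hεmean l,
      integral_const, probReal_univ, one_smul, zero_add]
  have hcov : cov[ε i, ε j; μ] = if i = j then Var[ε i; μ] else 0 := by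
    split_ifs with hij
    · subst hij
      exact covariance_self (hε i).aemeasurable
    · exact (hεindep hij).covariance_eq_zero (hε i) (hε j)
  have h := covariance_eq_sub (X := fun ω => ε i ω + b i) (Y := fun ω => ε j ω + b j)
    ((hε i).add (memLp_const (b i))) ((hε j).add (memLp_const (b j)))
  rw [covariance_add_const_left ((hε i).integrable one_le_two),
    covariance_add_const_right ((hε j).integrable one_le_two), hcov, hmean, hmean] at h
  simp only [Pi.mul_apply] at h
  linarith

variable [Fintype ι] {W : Ω → ι → ℝ}

lemma integral_sq_sum_mul {c : ι → Ω → ℝ}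
    (h : ∀ i j, Integrable (fun ω => W ω i * W ω j * (c i ω * c j ω)) μ) :
    ∫ ω, (∑ i, W ω i * c i ω) ^ 2 ∂μ =
      ∑ i, ∑ j, ∫ ω, W ω i * W ω j * (c i ω * c j ω) ∂μ := by
  have hexpand : ∀ ω, (∑ i, W ω i * c i ω) ^ 2 =
      ∑ i, ∑ j, W ω i * W ω j * (c i ω * c j ω) := fun ω => by
    rw [sq, Finset.sum_mul_sum]
    exact Finset.sum_congr rfl fun i _ => Finset.sum_congr rfl fun j _ => by ring
  simp_rw [hexpand]
  rw [integral_finsetSum _ fun i _ => integrable_finsetSum _ fun j _ => h i j]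
  exact Finset.sum_congr rfl fun i _ => integral_finsetSum _ fun j _ => h i j

lemma memLp_apply_of_ae_mem_stdSimplex [IsFiniteMeasure μ] (hW : Measurable W)
    (hsimplex : ∀ᵐ ω ∂μ, W ω ∈ stdSimplex ℝ ι) (p : ENNReal) (i : ι) :
    MemLp (fun ω => W ω i) p μ := by
  refine MemLp.of_bound ((measurable_pi_apply i).comp hW).aestronglyMeasurable 1
    (hsimplex.mono fun ω hω => ?_)
  obtain ⟨h0, h1⟩ := mem_Icc_of_mem_stdSimplex hω i
  rwa [Real.norm_eq_abs, abs_of_nonneg h0]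

variable [IsProbabilityMeasure μ]

theorem integral_sq_sum_mul_add_eq (hW : ∀ i, MemLp (fun ω => W ω i) 2 μ)
    (hε : ∀ i, MemLp (ε i) 2 μ) (hεindep : Pairwise fun i j => IndepFun (ε i) (ε j) μ)
    (hεmean : ∀ i, μ[ε i] = 0) (hWε : IndepFun W (fun ω i => ε i ω) μ) (b : ι → ℝ) :
    ∫ ω, (∑ i, W ω i * (ε i ω + b i)) ^ 2 ∂μ =
      ∫ ω, (∑ i, W ω i * b i) ^ 2 ∂μ + ∑ i, (∫ ω, W ω i ^ 2 ∂μ) * Var[ε i; μ] := by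
  classical
  have hWW : ∀ i j, Integrable (fun ω => W ω i * W ω j) μ := fun i j =>
    (hW i).integrable_mul (hW j)
  have hXX : ∀ i j, Integrable (fun ω => (ε i ω + b i) * (ε j ω + b j)) μ := fun i j =>
    ((hε i).add (memLp_const (b i))).integrable_mul ((hε j).add (memLp_const (b j)))
  have hindep : ∀ i j, IndepFun (fun ω => W ω i * W ω j)
      (fun ω => (ε i ω + b i) * (ε j ω + b j)) μ := fun i j =>
    hWε.comp (show Measurable fun v : ι → ℝ => v i * v j by fun_prop)
      (show Measurable fun v : ι → ℝ => (v i + b i) * (v j + b j) by fun_prop)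
  have hterm : ∀ i j, ∫ ω, W ω i * W ω j * ((ε i ω + b i) * (ε j ω + b j)) ∂μ =
      (∫ ω, W ω i * W ω j ∂μ) * (b i * b j + if i = j then Var[ε i; μ] else 0) := fun i j => by
    rw [(hindep i j).integral_fun_mul_eq_mul_integral (hWW i j).aestronglyMeasurable
      (hXX i j).aestronglyMeasurable, integral_add_const_mul_add_const hε hεindep hεmean]
  rw [integral_sq_sum_mul fun i j => (hindep i j).integrable_mul (hWW i j) (hXX i j),
    integral_sq_sum_mul (c := fun i _ => b i) fun i j => (hWW i j).mul_const _]
  simp_rw [hterm, integral_mul_const, mul_add, Finset.sum_add_distrib, mul_ite, mul_zero,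
    Finset.sum_ite_eq, Finset.mem_univ, if_true, sq]

lemma integral_sq_sum_mul_le_of_ae_mem_stdSimplex (hsimplex : ∀ᵐ ω ∂μ, W ω ∈ stdSimplex ℝ ι)
    {b : ι → ℝ} {c : ℝ} (hb : ∀ i, |b i| ≤ c) :
    ∫ ω, (∑ i, W ω i * b i) ^ 2 ∂μ ≤ c ^ 2 := by
  have hbound : ∀ᵐ ω ∂μ, ‖(∑ i, W ω i * b i) ^ 2‖ ≤ c ^ 2 := hsimplex.mono fun ω hω => by
    rw [norm_pow, Real.norm_eq_abs]
    exact pow_le_pow_left₀ (abs_nonneg _) (abs_le.2 <| (convex_Icc (-c) c).sum_mem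
      (fun i _ => hω.1 i) hω.2 fun i _ => abs_le.1 (hb i)) 2
  simpa using (Real.le_norm_self _).trans (norm_integral_le_of_norm_le_const hbound)

end RandomWeights

theorem nnk_excess_risk_core_general {Ω : Type*} [MeasurableSpace Ω] {μ : Measure Ω}
    [IsProbabilityMeasure μ] {k : ℕ} (hk : 1 ≤ k)
    (ν A A' δ α α' : ℝ)
    (hδ : 0 ≤ δ)
    (ε : Fin k → Ω → ℝ) (hεL2 : ∀ i, MemLp (ε i) 2 μ)
    (hεindep : iIndepFun ε μ)
    (hεmean : ∀ i, ∫ ω, ε i ω ∂μ = 0)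
    (hεvar : ∀ i, variance (ε i) μ ≤ ν + A' * δ ^ α')
    (E : Fin k → Ω → ℝ) (hEmeas : ∀ i, Measurable (E i))
    (hEindep : iIndepFun E μ)
    (hEdist : ∀ i, Measure.map (E i) μ = expMeasure 1)
    (hEε : IndepFun (fun ω i => E i ω) (fun ω i => ε i ω) μ)
    (W : Ω → Fin k → ℝ) (hW : ∀ ω i, W ω i = E i ω / ∑ j, E j ω)
    (b : Fin k → ℝ) (hb : ∀ i, |b i| ≤ A * δ ^ α) :
    ∫ ω, (∑ i, W ω i * (ε i ω + b i)) ^ 2 ∂μ ≤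
      A ^ 2 * δ ^ (2 * α) + (2 / (k + 1)) * (ν + A' * δ ^ α') := by
  have : Nonempty (Fin k) := ⟨⟨0, hk⟩⟩
  have hWeq : W = (fun v i => v i / ∑ j, v j) ∘ fun ω i => E i ω := funext fun ω => funext (hW ω)
  have hWm : Measurable W := hWeq ▸ (by fun_prop : Measurable fun v : Fin k → ℝ =>
    fun i => v i / ∑ j, v j).comp (measurable_pi_lambda _ hEmeas)
  have hsimplex : ∀ᵐ ω ∂μ, W ω ∈ stdSimplex ℝ (Fin k) :=
    hWeq ▸ ae_div_sum_mem_stdSimplex_of_map_eq_expMeasure hEmeas hEdist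
  have hWε : IndepFun W (fun ω i => ε i ω) μ := hWeq ▸ hEε.comp (by fun_prop) measurable_id
  have hmoment : ∀ i, ∫ ω, W ω i ^ 2 ∂μ = 2 / (k * (k + 1)) := fun i => by
    simp_rw [hW]
    rw [integral_sq_div_sum_of_iIndepFun_expMeasure hEmeas hEindep hEdist i, Fintype.card_fin]
  have hbias : ∫ ω, (∑ i, W ω i * b i) ^ 2 ∂μ ≤ A ^ 2 * δ ^ (2 * α) := by
    rw [mul_comm 2 α, rpow_mul hδ, rpow_two, ← mul_pow]
    exact integral_sq_sum_mul_le_of_ae_mem_stdSimplex hsimplex hb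
  rw [integral_sq_sum_mul_add_eq (memLp_apply_of_ae_mem_stdSimplex hWm hsimplex 2) hεL2
    (fun i j hij => hεindep.indepFun hij) hεmean hWε b]
  have hk0 : (k : ℝ) ≠ 0 := Nat.cast_ne_zero.2 (by omega)
  calc _ ≤ A ^ 2 * δ ^ (2 * α) + ∑ _i : Fin k, 2 / (k * (k + 1)) * (ν + A' * δ ^ α') := by
        refine add_le_add hbias (Finset.sum_le_sum fun i _ => ?_)
        rw [hmoment]
        exact mul_le_mul_of_nonneg_left (hεvar i) (by positivity)
    _ = A ^ 2 * δ ^ (2 * α) + (2 / (k + 1)) * (ν + A' * δ ^ α') := by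
        rw [Finset.sum_const, Finset.card_univ, Fintype.card_fin, nsmul_eq_mul]
        field_simp

/-- in-hull core of Theorem 1: bound on the second moment of the NNK
interpolation error, combining Dirichlet(1,…,1) weights (normalized i.i.d. rate-1
exponentials), independent centered noise with Hölder-controlled variance, and
Hölder-controlled bias terms. -/
theorem nnk_excess_risk_core {Ω : Type*} [MeasurableSpace Ω] {μ : Measure Ω}
    [IsProbabilityMeasure μ] {k : ℕ} (hk : 1 ≤ k)
    (ν A A' δ α α' : ℝ) (hν : 0 ≤ ν) (hA : 0 ≤ A) (hA' : 0 ≤ A')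
    (hδ : 0 ≤ δ) (hα : 0 < α) (hα' : 0 < α')
    (ε : Fin k → Ω → ℝ) (hεL2 : ∀ i, MemLp (ε i) 2 μ)
    (hεindep : iIndepFun ε μ)
    (hεmean : ∀ i, ∫ ω, ε i ω ∂μ = 0)
    (hεvar : ∀ i, variance (ε i) μ ≤ ν + A' * δ ^ α')
    (E : Fin k → Ω → ℝ) (hEmeas : ∀ i, Measurable (E i))
    (hEindep : iIndepFun E μ)
    (hEdist : ∀ i, Measure.map (E i) μ = expMeasure 1)
    (hEε : IndepFun (fun ω i => E i ω) (fun ω i => ε i ω) μ)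
    (W : Ω → Fin k → ℝ) (hW : ∀ ω i, W ω i = E i ω / ∑ j, E j ω)
    (b : Fin k → ℝ) (hb : ∀ i, |b i| ≤ A * δ ^ α) :
    ∫ ω, (∑ i, W ω i * (ε i ω + b i)) ^ 2 ∂μ ≤
      A ^ 2 * δ ^ (2 * α) + (2 / (k + 1)) * (ν + A' * δ ^ α') :=
  nnk_excess_risk_core_general hk ν A A' δ α α' hδ ε hεL2 hεindep hεmean hεvar E hEmeas hEindep
    hEdist hEε W hW b hb
end

section
/- Let (Ω, F, P) be a probability space, E a measurable space, X : Ω → E measurable, and η, η̂ : E → [0,1] measurable. For p ∈ [0,1] and b ∈ {0,1} let r(b, p) = 1 − p if b = 1 and p if b = 0, and define f*(x) = 1[η(x) > 1/2] and f̂(x) = 1[η̂(x) > 1/2]. Then E[r(f̂(X), η(X))] − E[r(f*(X), η(X))] ≤ 2·√(E[(η̂(X) − η(X))²]). -/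
/-! The plug-in classifier disagrees with the Bayes classifier only when `η̂(x)` and `η(x)` lie on
opposite sides of `1/2`, and then the excess risk at `x` is `|2 η(x) - 1| ≤ 2 |η̂(x) - η(x)|`.
Integrating this pointwise bound and using `(E |Z|)² ≤ E[Z²]` (nonnegativity of the variance)
gives the claim. -/

open MeasureTheory ProbabilityTheory

def binaryRisk (b : Bool) (p : ℝ) : ℝ := if b then 1 - p else p

lemma binaryRisk_plugin_sub_bayes_le (p q : ℝ) :
    binaryRisk (decide (1 / 2 < q)) p - binaryRisk (decide (1 / 2 < p)) p ≤ 2 * |q - p| := by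
  unfold binaryRisk
  have := le_abs_self (q - p)
  have := neg_abs_le (q - p)
  split_ifs with hq hp hp <;> simp only [decide_eq_true_eq] at * <;> linarith

lemma abs_binaryRisk_le_one (b : Bool) {p : ℝ} (hp : p ∈ Set.Icc (0 : ℝ) 1) :
    |binaryRisk b p| ≤ 1 := by
  obtain ⟨hp0, hp1⟩ := hp
  unfold binaryRisk
  rw [abs_le]
  split_ifs <;> constructor <;> linarith

lemma measurable_decide_lt {α : Type*} [MeasurableSpace α] {f g : α → ℝ}
    (hf : Measurable f) (hg : Measurable g) : Measurable fun a => decide (f a < g a) :=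
  measurable_to_bool <| by
    simpa only [Set.preimage, Set.mem_singleton_iff, decide_eq_true_eq] using measurableSet_lt hf hg

lemma Measurable.binaryRisk {α : Type*} [MeasurableSpace α] {b : α → Bool} {p : α → ℝ}
    (hb : Measurable b) (hp : Measurable p) : Measurable fun a => binaryRisk (b a) (p a) :=
  Measurable.ite (hb (measurableSet_singleton true)) (measurable_const.sub hp) hp

lemma integral_le_sqrt_integral_sq {Ω : Type*} [MeasurableSpace Ω] {μ : Measure Ω}
    [IsProbabilityMeasure μ] {f : Ω → ℝ} (hf : MemLp f 2 μ) :
    ∫ ω, f ω ∂μ ≤ √(∫ ω, f ω ^ 2 ∂μ) := by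
  refine Real.le_sqrt_of_sq_le ?_
  have := variance_nonneg f μ
  rw [variance_eq_sub hf] at this
  simpa using this

/-- Corollary 2 core inequality: the excess risk of the plug-in classifier
is at most twice the square root of the mean squared error of the regression estimate. -/
theorem plugin_excess_risk_le_two_sqrt_mse {Ω : Type*} [MeasurableSpace Ω]
    {μ : Measure Ω} [IsProbabilityMeasure μ]
    {E : Type*} [MeasurableSpace E] (X : Ω → E) (hX : Measurable X)
    (η ηhat : E → ℝ) (hη : Measurable η) (hηhat : Measurable ηhat)
    (hη01 : ∀ x, η x ∈ Set.Icc (0 : ℝ) 1) (hηhat01 : ∀ x, ηhat x ∈ Set.Icc (0 : ℝ) 1)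
    (r : Bool → ℝ → ℝ) (hr : ∀ b x, r b x = if b then 1 - x else x)
    (fstar fhat : E → Bool)
    (hfstar : ∀ x, fstar x = decide (1 / 2 < η x))
    (hfhat : ∀ x, fhat x = decide (1 / 2 < ηhat x)) :
    (∫ ω, r (fhat (X ω)) (η (X ω)) ∂μ) - (∫ ω, r (fstar (X ω)) (η (X ω)) ∂μ) ≤
      2 * Real.sqrt (∫ ω, (ηhat (X ω) - η (X ω)) ^ 2 ∂μ) := by
  obtain rfl : r = binaryRisk := funext₂ hr
  obtain rfl : fstar = fun x => decide (1 / 2 < η x) := funext hfstar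
  obtain rfl : fhat = fun x => decide (1 / 2 < ηhat x) := funext hfhat
  have hηX : Measurable fun ω => η (X ω) := hη.comp hX
  have hηhatX : Measurable fun ω => ηhat (X ω) := hηhat.comp hX
  have integrable_risk {g : Ω → ℝ} (hg : Measurable g) :
      Integrable (fun ω => binaryRisk (decide (1 / 2 < g ω)) (η (X ω))) μ :=
    .of_bound ((measurable_decide_lt measurable_const hg).binaryRisk hηX).aestronglyMeasurable 1
      (.of_forall fun ω => abs_binaryRisk_le_one _ (hη01 (X ω)))
  have hdiff : MemLp (fun ω => |ηhat (X ω) - η (X ω)|) 2 μ :=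
    memLp_of_bounded (a := 0) (b := 1) (.of_forall fun ω =>
      ⟨abs_nonneg _, abs_sub_le_of_nonneg_of_le (hηhat01 (X ω)).1 (hηhat01 (X ω)).2
        (hη01 (X ω)).1 (hη01 (X ω)).2⟩)
      (hηhatX.sub hηX).abs.aestronglyMeasurable 2
  calc _ = ∫ ω, binaryRisk (decide (1 / 2 < ηhat (X ω))) (η (X ω))
          - binaryRisk (decide (1 / 2 < η (X ω))) (η (X ω)) ∂μ :=
        (integral_sub (integrable_risk hηhatX) (integrable_risk hηX)).symm
    _ ≤ ∫ ω, 2 * |ηhat (X ω) - η (X ω)| ∂μ :=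
        integral_mono ((integrable_risk hηhatX).sub (integrable_risk hηX))
          ((hdiff.integrable one_le_two).const_mul 2) fun ω => binaryRisk_plugin_sub_bayes_le _ _
    _ ≤ 2 * √(∫ ω, |ηhat (X ω) - η (X ω)| ^ 2 ∂μ) := by
        rw [integral_const_mul]
        gcongr
        exact integral_le_sqrt_integral_sq hdiff
    _ = _ := by simp only [sq_abs]
end
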